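/- (One-step back lemma for low-rank MDPs.) Let S be a finite state space, 𝒜 a finite action set of size A, H ∈ ℕ, d₀ an initial distribution on S, and d ∈ ℕ. Suppose the transition model P is low rank: P_h(s'|s,a) = ⟨φ_h(s,a), μ_h(s')⟩ with φ_h : S×𝒜 → ℝ^d and μ_h : S → ℝ^d satisfying ‖Σ_{s'} g(s') μ_h(s')‖₂ ≤ √d for every g : S → [−1,1]. Let ν be any probability distribution on S×𝒜 (playing the role of the step-h occupancy of a mixture policy ρ), let n ≥ 1 and λ > 0, set Σ_h := n · Σ_{(s,a)} ν(s,a) φ_h(s,a)φ_h(s,a)ᵀ + λI, and let ν^{+1} be the distribution on S×𝒜 given by ν^{+1}(s',a') := (1/A) Σ_{(s,a)} ν(s,a) P_h(s'|s,a). Then for every g : S×𝒜 → ℝ, every policy π, and every h ∈ {0,…,H−2}: E_{π,P}[g(s_{h+1},a_{h+1})] ≤ E_{π,P}[‖φ_h(s_h,a_h)‖_{Σ_h^{-1}}] · √( n·A·E_{(s,a)∼ν^{+1}}[g(s,a)²] + λ·d·(max_{(s,a)}|g(s,a)|)² ), where ‖v‖_M := √(vᵀMv) and E_{π,P} is the expectation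 over the trajectory generated by executing π in P from d₀. -/

import Mathlib

/-!
Put `f(s') = Σ_{a'} π_{h+1}(a'|s') g(s',a')` and `w = Σ_{s'} f(s') μ_h(s') ∈ ℝ^d`. By the low-rank
factorisation `E_{s' ∼ P_h(s,a)}[f(s')] = ⟨φ_h(s,a), w⟩`, so the step-`(h+1)` expectation of `g` is
the step-`h` expectation of `⟨φ_h, w⟩`, and Cauchy–Schwarz in the geometry of `Σ_h` gives
`⟨φ_h, w⟩ ≤ ‖φ_h‖_{Σ_h⁻¹} ‖w‖_{Σ_h}`. Finally `‖w‖²_{Σ_h} = n E_ν[⟨φ_h, w⟩²] + λ ‖w‖²`, where by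
Jensen `⟨φ_h(s,a), w⟩² ≤ E_{s' ∼ P_h(s,a)}[Σ_{a'} g(s',a')²]`, whose `ν`-average is `A E_{ν⁺¹}[g²]`,
and `‖w‖² ≤ d (max |g|)²` by the normalisation of `μ_h` applied to `f / max |g|`.
-/

noncomputable section

open Finset

/-- `p` is a probability distribution on the finite type `X`. -/
def IsDist {X : Type*} [Fintype X] (p : X → ℝ) : Prop :=
  (∀ x, 0 ≤ p x) ∧ (∑ x, p x) = 1

variable {S Act : Type*} [Fintype S] [Fintype Act]

/-- Occupancy measure `d^π_{P;h}(s,a)`: the probability that, executing the policy `π`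
in the transition model `P` starting from `d0`, the state-action pair at step `h`
is `(s,a)`. -/
def occ (d0 : S → ℝ) (π : ℕ → S → Act → ℝ) (P : ℕ → S → Act → S → ℝ) :
    ℕ → S → Act → ℝ
  | 0 => fun s a => d0 s * π 0 s a
  | h + 1 => fun s' a' => (∑ s, ∑ a, occ d0 π P h s a * P h s a s') * π (h + 1) s' a'

open Matrix

namespace IsDist

variable {X : Type*} [Fintype X] {p : X → ℝ}

lemma le_one (hp : IsDist p) (x : X) : p x ≤ 1 :=
  (single_le_sum (f := p) (fun y _ => hp.1 y) (mem_univ x)).trans_eq hp.2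

lemma abs_sum_mul_le (hp : IsDist p) {f : X → ℝ} {G : ℝ} (hf : ∀ x, |f x| ≤ G) :
    |∑ x, p x * f x| ≤ G :=
  calc |∑ x, p x * f x| ≤ ∑ x, p x * |f x| := by
        simpa only [abs_mul, abs_of_nonneg (hp.1 _)] using
          abs_sum_le_sum_abs (fun x => p x * f x) univ
    _ ≤ ∑ x, p x * G := by gcongr with x; exacts [hp.1 x, hf x]
    _ = G := by rw [← sum_mul, hp.2, one_mul]

lemma sq_sum_mul_le (hp : IsDist p) (f : X → ℝ) :
    (∑ x, p x * f x) ^ 2 ≤ ∑ x, p x * f x ^ 2 := by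
  have := sum_sq_le_sum_mul_sum_of_sq_le_mul (r := fun x => p x * f x) univ (fun x _ => hp.1 x)
    (fun x _ => mul_nonneg (hp.1 x) (sq_nonneg (f x))) (fun x _ => le_of_eq (by ring))
  rwa [hp.2, one_mul] at this

lemma sq_sum_mul_le_sum_sq (hp : IsDist p) (f : X → ℝ) :
    (∑ x, p x * f x) ^ 2 ≤ ∑ x, f x ^ 2 :=
  (hp.sq_sum_mul_le f).trans <| sum_le_sum fun x _ =>
    mul_le_of_le_one_left (sq_nonneg _) (hp.le_one x)

end IsDist

lemma sum_pushforward_mul (w : S → Act → ℝ) (K : S → Act → S → ℝ) (F : S → ℝ) :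
    ∑ s', (∑ s, ∑ a, w s a * K s a s') * F s' = ∑ s, ∑ a, w s a * ∑ s', K s a s' * F s' := by
  simp only [Finset.sum_mul, mul_assoc]
  rw [Finset.sum_comm]
  refine sum_congr rfl fun s _ => ?_
  rw [Finset.sum_comm]
  exact sum_congr rfl fun a _ => (mul_sum ..).symm

lemma card_mul_sum_uniformStep_mul [Nonempty Act] (ν : S → Act → ℝ) (K : S → Act → S → ℝ)
    (q : S → Act → ℝ) :
    (Fintype.card Act : ℝ) *
        ∑ s', ∑ a', ((1 / (Fintype.card Act : ℝ)) * ∑ s, ∑ a, ν s a * K s a s') * q s' a'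
      = ∑ s, ∑ a, ν s a * ∑ s', K s a s' * ∑ a', q s' a' := by
  have hA : (Fintype.card Act : ℝ) ≠ 0 := Nat.cast_ne_zero.mpr Fintype.card_ne_zero
  simp only [mul_assoc, ← mul_sum]
  rw [← mul_assoc, mul_one_div_cancel hA, one_mul]
  exact sum_pushforward_mul ν K _

section Occupancy

variable {d0 : S → ℝ} {π : ℕ → S → Act → ℝ} {P : ℕ → S → Act → S → ℝ}

lemma occ_nonneg (hd0 : ∀ s, 0 ≤ d0 s) (hπ : ∀ h s a, 0 ≤ π h s a)
    (hP : ∀ h s a s', 0 ≤ P h s a s') (h : ℕ) (s : S) (a : Act) : 0 ≤ occ d0 π P h s a := by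
  induction h generalizing s a with
  | zero => exact mul_nonneg (hd0 s) (hπ 0 s a)
  | succ h ih =>
    exact mul_nonneg (sum_nonneg fun s _ => sum_nonneg fun a _ => mul_nonneg (ih s a) (hP h s a _))
      (hπ (h + 1) s a)

lemma sum_occ_succ_mul (g : S → Act → ℝ) (h : ℕ) :
    ∑ s', ∑ a', occ d0 π P (h + 1) s' a' * g s' a'
      = ∑ s, ∑ a, occ d0 π P h s a * ∑ s', P h s a s' * ∑ a', π (h + 1) s' a' * g s' a' := by
  simp only [occ, mul_assoc, ← Finset.mul_sum]
  exact sum_pushforward_mul _ _ _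

end Occupancy

lemma sum_mul_eq_dotProduct_of_lowRank {Y ι : Type*} [Fintype Y] [Fintype ι] {p : Y → ℝ}
    {u : ι → ℝ} {μ : Y → ι → ℝ} (hp : ∀ y, p y = ∑ i, u i * μ y i) (f : Y → ℝ) :
    ∑ y, p y * f y = u ⬝ᵥ fun i => ∑ y, f y * μ y i := by
  simp only [hp, dotProduct, sum_mul, mul_sum]
  rw [sum_comm]
  exact sum_congr rfl fun i _ => sum_congr rfl fun y _ => by ring

lemma sum_sq_sum_mul_le_of_abs_le {Y : Type*} [Fintype Y] {d : ℕ} {μ : Y → Fin d → ℝ}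
    (hμ : ∀ g : Y → ℝ, (∀ y, -1 ≤ g y ∧ g y ≤ 1) →
      √(∑ i, (∑ y, g y * μ y i) ^ 2) ≤ √d)
    {f : Y → ℝ} {G : ℝ} (hf : ∀ y, |f y| ≤ G) :
    ∑ i, (∑ y, f y * μ y i) ^ 2 ≤ d * G ^ 2 := by
  rcases le_or_gt G 0 with hG | hG
  · have hf0 : ∀ y, f y = 0 := fun y => abs_nonpos_iff.mp ((hf y).trans hG)
    simp only [hf0, zero_mul, sum_const_zero, zero_pow two_ne_zero]
    positivity
  have hfG : ∀ y, -1 ≤ f y / G ∧ f y / G ≤ 1 := fun y => abs_le.mp <| by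
    rw [abs_div, abs_of_pos hG]
    exact div_le_one_of_le₀ (hf y) hG.le
  have hscaled := hμ _ hfG
  rw [Real.sqrt_le_sqrt_iff (Nat.cast_nonneg d)] at hscaled
  simp only [div_mul_eq_mul_div, ← sum_div, div_pow] at hscaled
  rwa [div_le_iff₀ (by positivity)] at hscaled

lemma Matrix.IsHermitian.dotProduct_mulVec_comm {ι : Type*} [Fintype ι] {M : Matrix ι ι ℝ}
    (hM : M.IsHermitian) (u v : ι → ℝ) : u ⬝ᵥ M *ᵥ v = v ⬝ᵥ M *ᵥ u := by
  rw [dotProduct_mulVec, ← mulVec_transpose, ← conjTranspose_eq_transpose_of_trivial, hM.eq,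
    dotProduct_comm]

lemma Matrix.PosSemidef.dotProduct_mulVec_sq_le {ι : Type*} [Fintype ι] {M : Matrix ι ι ℝ}
    (hM : M.PosSemidef) (u v : ι → ℝ) :
    (u ⬝ᵥ M *ᵥ v) ^ 2 ≤ (u ⬝ᵥ M *ᵥ u) * (v ⬝ᵥ M *ᵥ v) := by
  have hquad : ∀ t : ℝ,
      0 ≤ (v ⬝ᵥ M *ᵥ v) * (t * t) + (2 * (u ⬝ᵥ M *ᵥ v)) * t + (u ⬝ᵥ M *ᵥ u) := fun t => by
    have := hM.dotProduct_mulVec_nonneg (u + t • v)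
    simp only [star_trivial, mulVec_add, mulVec_smul, dotProduct_add, add_dotProduct,
      dotProduct_smul, smul_dotProduct, smul_eq_mul, hM.isHermitian.dotProduct_mulVec_comm v u]
      at this
    linarith
  have := discrim_le_zero hquad
  rw [discrim] at this
  nlinarith

lemma Matrix.PosDef.dotProduct_le_sqrt_mul_sqrt {ι : Type*} [Fintype ι] [DecidableEq ι]
    {M : Matrix ι ι ℝ} (hM : M.PosDef) (x y : ι → ℝ) :
    x ⬝ᵥ y ≤ √(x ⬝ᵥ M⁻¹ *ᵥ x) * √(y ⬝ᵥ M *ᵥ y) := by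
  have hx : M *ᵥ (M⁻¹ *ᵥ x) = x := by
    rw [mulVec_mulVec, mul_nonsing_inv _ ((isUnit_iff_isUnit_det M).mp hM.isUnit), one_mulVec]
  have hcs := hM.posSemidef.dotProduct_mulVec_sq_le (M⁻¹ *ᵥ x) y
  rw [hM.isHermitian.dotProduct_mulVec_comm, hx, dotProduct_comm y, dotProduct_comm (M⁻¹ *ᵥ x)]
    at hcs
  calc x ⬝ᵥ y ≤ √((x ⬝ᵥ M⁻¹ *ᵥ x) * (y ⬝ᵥ M *ᵥ y)) := Real.le_sqrt_of_sq_le hcs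
    _ = √(x ⬝ᵥ M⁻¹ *ᵥ x) * √(y ⬝ᵥ M *ᵥ y) :=
      Real.sqrt_mul (by simpa using hM.inv.posSemidef.dotProduct_mulVec_nonneg x) _

section DesignMatrix

variable {ι : Type*} [Fintype ι]

def designMatrix (ν : S → Act → ℝ) (φ : S → Act → ι → ℝ) : Matrix ι ι ℝ :=
  ∑ s, ∑ a, ν s a • vecMulVec (φ s a) (φ s a)

lemma posSemidef_designMatrix {ν : S → Act → ℝ} (hν : ∀ s a, 0 ≤ ν s a) (φ : S → Act → ι → ℝ) :
    (designMatrix ν φ).PosSemidef :=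
  posSemidef_sum _ fun s _ => posSemidef_sum _ fun a _ =>
    (show (vecMulVec (φ s a) (φ s a)).PosSemidef by
      simpa using posSemidef_vecMulVec_self_star (φ s a)).smul (hν s a)

lemma dotProduct_designMatrix_mulVec (ν : S → Act → ℝ) (φ : S → Act → ι → ℝ) (x : ι → ℝ) :
    x ⬝ᵥ designMatrix ν φ *ᵥ x = ∑ s, ∑ a, ν s a * (φ s a ⬝ᵥ x) ^ 2 := by
  simp only [designMatrix, sum_mulVec, smul_mulVec, vecMulVec_mulVec, dotProduct_sum,
    dotProduct_smul, smul_eq_mul]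
  refine sum_congr rfl fun s _ => sum_congr rfl fun a _ => ?_
  simp [dotProduct_comm x, sq]

lemma dotProduct_smul_add_smul_one_mulVec [DecidableEq ι] (c lam : ℝ) (D : Matrix ι ι ℝ)
    (x : ι → ℝ) : x ⬝ᵥ (c • D + lam • 1) *ᵥ x = c * (x ⬝ᵥ D *ᵥ x) + lam * ∑ i, x i ^ 2 := by
  rw [add_mulVec, smul_mulVec, smul_mulVec, one_mulVec, dotProduct_add, dotProduct_smul,
    dotProduct_smul, smul_eq_mul, smul_eq_mul]
  simp only [dotProduct, sq]

end DesignMatrix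

lemma dotProduct_regularized_designMatrix_mulVec_le {d : ℕ} {P : S → Act → S → ℝ}
    {φ : S → Act → Fin d → ℝ} {μ : S → Fin d → ℝ} {ν p g : S → Act → ℝ} {c lam G : ℝ}
    (hP : ∀ s a, IsDist (P s a)) (hlow : ∀ s a s', P s a s' = ∑ i, φ s a i * μ s' i)
    (hμ : ∀ g : S → ℝ, (∀ s', -1 ≤ g s' ∧ g s' ≤ 1) → √(∑ i, (∑ s', g s' * μ s' i) ^ 2) ≤ √d)
    (hν : ∀ s a, 0 ≤ ν s a) (hp : ∀ s, IsDist (p s)) (hg : ∀ s a, |g s a| ≤ G)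
    (hc : 0 ≤ c) (hlam : 0 ≤ lam) :
    let w : Fin d → ℝ := fun i => ∑ s', (∑ a', p s' a' * g s' a') * μ s' i
    w ⬝ᵥ (c • designMatrix ν φ + lam • 1) *ᵥ w
      ≤ c * ∑ s, ∑ a, ν s a * ∑ s', P s a s' * ∑ a', g s' a' ^ 2 + lam * (d * G ^ 2) := by
  intro w
  rw [dotProduct_smul_add_smul_one_mulVec, dotProduct_designMatrix_mulVec]
  gcongr with s _ a _
  · exact hν s a
  · rw [← sum_mul_eq_dotProduct_of_lowRank (hlow s a)]
    exact ((hP s a).sq_sum_mul_le _).trans <| sum_le_sum fun s' _ =>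
      mul_le_mul_of_nonneg_left ((hp s').sq_sum_mul_le_sum_sq _) ((hP s a).1 s')
  · exact sum_sq_sum_mul_le_of_abs_le hμ fun s' => (hp s').abs_sum_mul_le (hg s')

lemma Matrix.PosDef.sum_mul_dotProduct_le {ι : Type*} [Fintype ι] [DecidableEq ι]
    {M : Matrix ι ι ℝ} (hM : M.PosDef) {q : S → Act → ℝ} (hq : ∀ s a, 0 ≤ q s a)
    (φ : S → Act → ι → ℝ) (w : ι → ℝ) :
    ∑ s, ∑ a, q s a * (φ s a ⬝ᵥ w)
      ≤ (∑ s, ∑ a, q s a * √(φ s a ⬝ᵥ M⁻¹ *ᵥ φ s a)) * √(w ⬝ᵥ M *ᵥ w) :=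
  calc ∑ s, ∑ a, q s a * (φ s a ⬝ᵥ w)
      ≤ ∑ s, ∑ a, q s a * (√(φ s a ⬝ᵥ M⁻¹ *ᵥ φ s a) * √(w ⬝ᵥ M *ᵥ w)) := by
        gcongr with s _ a _
        exacts [hq s a, hM.dotProduct_le_sqrt_mul_sqrt _ _]
    _ = (∑ s, ∑ a, q s a * √(φ s a ⬝ᵥ M⁻¹ *ᵥ φ s a)) * √(w ⬝ᵥ M *ᵥ w) := by
        simp only [sum_mul, mul_assoc]

theorem one_step_back_general [Nonempty S] [Nonempty Act] (d : ℕ)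
    (d0 : S → ℝ) (hd0 : IsDist d0)
    (P : ℕ → S → Act → S → ℝ) (hP : ∀ h s a, IsDist (P h s a))
    (φ : ℕ → S → Act → Fin d → ℝ) (μ : ℕ → S → Fin d → ℝ)
    (hlow : ∀ h s a s', P h s a s' = ∑ i, φ h s a i * μ h s' i)
    (hμ : ∀ h (g : S → ℝ), (∀ s', -1 ≤ g s' ∧ g s' ≤ 1) →
      Real.sqrt (∑ i, (∑ s', g s' * μ h s' i) ^ 2) ≤ Real.sqrt d)
    (ν : S → Act → ℝ)
    (hν : (∀ s a, 0 ≤ ν s a) ∧ (∑ s, ∑ a, ν s a) = 1)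
    (n : ℕ) (lam : ℝ) (hlam : 0 < lam)
    (g : S → Act → ℝ)
    (π : ℕ → S → Act → ℝ) (hπ : ∀ h s, IsDist (π h s))
    (h : ℕ) :
    (∑ s, ∑ a, occ d0 π P (h + 1) s a * g s a)
      ≤ (∑ s, ∑ a, occ d0 π P h s a *
            Real.sqrt (φ h s a ⬝ᵥ
              (((n : ℝ) • (∑ s', ∑ a', ν s' a' •
                    vecMulVec (φ h s' a') (φ h s' a'))
                  + lam • (1 : Matrix (Fin d) (Fin d) ℝ))⁻¹).mulVec (φ h s a)))
          * Real.sqrt ((n : ℝ) * (Fintype.card Act : ℝ) *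
                (∑ s', ∑ a', ((1 / (Fintype.card Act : ℝ)) *
                    ∑ s, ∑ a, ν s a * P h s a s') * g s' a' ^ 2)
              + lam * (d : ℝ) *
                (Finset.univ.sup' Finset.univ_nonempty
                  (fun p : S × Act => |g p.1 p.2|)) ^ 2) := by
  set M : Matrix (Fin d) (Fin d) ℝ := (n : ℝ) • designMatrix ν (φ h) + lam • 1
  set G := univ.sup' univ_nonempty fun p : S × Act => |g p.1 p.2|
  set f : S → ℝ := fun s' => ∑ a', π (h + 1) s' a' * g s' a'
  set w : Fin d → ℝ := fun i => ∑ s', f s' * μ h s' i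
  have hgG : ∀ s a, |g s a| ≤ G := fun s a =>
    le_sup' (fun p : S × Act => |g p.1 p.2|) (mem_univ (s, a))
  have hM : M.PosDef :=
    .posSemidef_add ((posSemidef_designMatrix hν.1 (φ h)).smul n.cast_nonneg) (.smul .one hlam)
  have hocc := occ_nonneg hd0.1 (fun k s => (hπ k s).1) (fun k s a => (hP k s a).1) h
  have henergy : w ⬝ᵥ M *ᵥ w ≤ (n : ℝ) * (Fintype.card Act : ℝ) *
        (∑ s', ∑ a', ((1 / (Fintype.card Act : ℝ)) * ∑ s, ∑ a, ν s a * P h s a s') * g s' a' ^ 2)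
      + lam * d * G ^ 2 := by
    refine (dotProduct_regularized_designMatrix_mulVec_le (hP h) (hlow h) (hμ h) hν.1 (hπ (h + 1))
      hgG n.cast_nonneg hlam.le).trans_eq ?_
    rw [mul_assoc (n : ℝ), card_mul_sum_uniformStep_mul ν (P h) fun s a => g s a ^ 2]
    ring
  calc ∑ s, ∑ a, occ d0 π P (h + 1) s a * g s a
      = ∑ s, ∑ a, occ d0 π P h s a * (φ h s a ⬝ᵥ w) := by
        rw [sum_occ_succ_mul]
        exact sum_congr rfl fun s _ => sum_congr rfl fun a _ =>
          congrArg _ (sum_mul_eq_dotProduct_of_lowRank (hlow h s a) f)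
    _ ≤ (∑ s, ∑ a, occ d0 π P h s a * √(φ h s a ⬝ᵥ M⁻¹ *ᵥ φ h s a)) * √(w ⬝ᵥ M *ᵥ w) :=
        hM.sum_mul_dotProduct_le hocc (φ h) w
    _ ≤ _ := mul_le_mul_of_nonneg_left (Real.sqrt_le_sqrt henergy) <|
        sum_nonneg fun s _ => sum_nonneg fun a _ => mul_nonneg (hocc s a) (Real.sqrt_nonneg _)

/-- **One-step back lemma for low-rank MDPs.**
Suppose `P_h(s'|s,a) = ⟨φ_h(s,a), μ_h(s')⟩` is low rank of dimension `d` with the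
normalization `‖Σ_{s'} g(s') μ_h(s')‖₂ ≤ √d` for every `g : S → [−1,1]`.  Let `ν` be a
distribution on `S × Act` and `Σ_h := n · Σ_{(s,a)} ν(s,a) φ_h(s,a)φ_h(s,a)ᵀ + λ I`,
and let `ν⁺¹(s',a') := (1/A) Σ_{(s,a)} ν(s,a) P_h(s'|s,a)`.  Then for every
`g : S × Act → ℝ`, every policy `π` and every `h ∈ {0,…,H−2}`:
`E_{π,P}[g(s_{h+1},a_{h+1})] ≤ E_{π,P}[‖φ_h(s_h,a_h)‖_{Σ_h⁻¹}] ·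
  √(n A E_{ν⁺¹}[g²] + λ d (max |g|)²)`. -/
theorem one_step_back [Nonempty S] [Nonempty Act] (d H : ℕ)
    (d0 : S → ℝ) (hd0 : IsDist d0)
    (P : ℕ → S → Act → S → ℝ) (hP : ∀ h s a, IsDist (P h s a))
    (φ : ℕ → S → Act → Fin d → ℝ) (μ : ℕ → S → Fin d → ℝ)
    (hlow : ∀ h s a s', P h s a s' = ∑ i, φ h s a i * μ h s' i)
    (hμ : ∀ h (g : S → ℝ), (∀ s', -1 ≤ g s' ∧ g s' ≤ 1) →
      Real.sqrt (∑ i, (∑ s', g s' * μ h s' i) ^ 2) ≤ Real.sqrt d)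
    (ν : S → Act → ℝ)
    (hν : (∀ s a, 0 ≤ ν s a) ∧ (∑ s, ∑ a, ν s a) = 1)
    (n : ℕ) (hn : 1 ≤ n) (lam : ℝ) (hlam : 0 < lam)
    (g : S → Act → ℝ)
    (π : ℕ → S → Act → ℝ) (hπ : ∀ h s, IsDist (π h s))
    (h : ℕ) (hh : h + 2 ≤ H) :
    (∑ s, ∑ a, occ d0 π P (h + 1) s a * g s a)
      ≤ (∑ s, ∑ a, occ d0 π P h s a *
            Real.sqrt (φ h s a ⬝ᵥ
              (((n : ℝ) • (∑ s', ∑ a', ν s' a' •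
                    vecMulVec (φ h s' a') (φ h s' a'))
                  + lam • (1 : Matrix (Fin d) (Fin d) ℝ))⁻¹).mulVec (φ h s a)))
          * Real.sqrt ((n : ℝ) * (Fintype.card Act : ℝ) *
                (∑ s', ∑ a', ((1 / (Fintype.card Act : ℝ)) *
                    ∑ s, ∑ a, ν s a * P h s a s') * g s' a' ^ 2)
              + lam * (d : ℝ) *
                (Finset.univ.sup' Finset.univ_nonempty
                  (fun p : S × Act => |g p.1 p.2|)) ^ 2) :=
  one_step_back_general d d0 hd0 P hP φ μ hlow hμ ν hν n lam hlam g π hπ h
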